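/- For all F = F₀ + F_v and G = G₀ + G_v in ℍ_ℂ, the characteristic polynomial of the Sylvester operator S_{F,G}, regarded as a ℂ-linear endomorphism of the 4-dimensional ℂ-vector space ℍ_ℂ, equals ((X − (F₀ + G₀))² + F_v^s + G_v^s)² − 4·F_v^s·G_v^s in ℂ[X]. (Equivalently, the four eigenvalues of S_{F,G}, counted with multiplicity, are F₀ + G₀ ± 𝕚(a ± b) for any fixed a, b ∈ ℂ with a² = F_v^s and b² = G_v^s.) -/

import Mathlib

/-!
In the basis `1, i, j, k` the matrices of `z ↦ p z` and `z ↦ z q` are explicit, and expanding the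
`4 × 4` determinant of `X - (L_p + R_q)` gives the stated polynomial identity in the coordinates
of `p` and `q`, over any commutative ring.
-/

open Quaternion Polynomial

/-- The Sylvester operator `S_{F,G}(z) = Fz + zG` as a `ℂ`-linear endomorphism of the
complex quaternions. -/
noncomputable def sylvesterOp (F G : Quaternion ℂ) : Quaternion ℂ →ₗ[ℂ] Quaternion ℂ :=
  letI : SMulCommClass ℂ ℍ[ℂ] ℍ[ℂ] := Algebra.to_smulCommClass (R := ℂ) (A := ℍ[ℂ])
  letI : IsScalarTower ℂ ℍ[ℂ] ℍ[ℂ] := IsScalarTower.right (R := ℂ) (A := ℍ[ℂ])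
  LinearMap.mulLeft ℂ F + LinearMap.mulRight ℂ G

theorem Matrix.det_fin_four {R : Type*} [CommRing R] (A : Matrix (Fin 4) (Fin 4) R) :
    A.det =
      A 0 0 * A 1 1 * A 2 2 * A 3 3 - A 0 0 * A 1 1 * A 2 3 * A 3 2 -
        A 0 0 * A 1 2 * A 2 1 * A 3 3 + A 0 0 * A 1 2 * A 2 3 * A 3 1 +
        A 0 0 * A 1 3 * A 2 1 * A 3 2 - A 0 0 * A 1 3 * A 2 2 * A 3 1 -
        A 0 1 * A 1 0 * A 2 2 * A 3 3 + A 0 1 * A 1 0 * A 2 3 * A 3 2 +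
        A 0 1 * A 1 2 * A 2 0 * A 3 3 - A 0 1 * A 1 2 * A 2 3 * A 3 0 -
        A 0 1 * A 1 3 * A 2 0 * A 3 2 + A 0 1 * A 1 3 * A 2 2 * A 3 0 +
        A 0 2 * A 1 0 * A 2 1 * A 3 3 - A 0 2 * A 1 0 * A 2 3 * A 3 1 -
        A 0 2 * A 1 1 * A 2 0 * A 3 3 + A 0 2 * A 1 1 * A 2 3 * A 3 0 +
        A 0 2 * A 1 3 * A 2 0 * A 3 1 - A 0 2 * A 1 3 * A 2 1 * A 3 0 -
        A 0 3 * A 1 0 * A 2 1 * A 3 2 + A 0 3 * A 1 0 * A 2 2 * A 3 1 +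
        A 0 3 * A 1 1 * A 2 0 * A 3 2 - A 0 3 * A 1 1 * A 2 2 * A 3 0 -
        A 0 3 * A 1 2 * A 2 0 * A 3 1 + A 0 3 * A 1 2 * A 2 1 * A 3 0 := by
  simp only [det_succ_row_zero, Fin.sum_univ_succ, submatrix_apply, det_unique, Fin.succAbove,
    Fin.reduceSucc, Fin.reduceCastSucc, Fin.reduceLT, ↓reduceIte, Fin.default_eq_zero,
    Finset.univ_unique, Finset.sum_singleton, Fin.val_zero, Fin.val_succ]
  ring

namespace Quaternion

variable {R : Type*} [CommRing R]

noncomputable def basisOneIJK : Module.Basis (Fin 4) R ℍ[R] :=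
  QuaternionAlgebra.basisOneIJK (-1) 0 (-1)

@[simp]
theorem repr_basisOneIJK (q : ℍ[R]) : basisOneIJK.repr q = ![q.re, q.imI, q.imJ, q.imK] := rfl

@[simp]
theorem re_basisOneIJK (i : Fin 4) : (basisOneIJK i : ℍ[R]).re = Finsupp.single i 1 0 := by
  rw [← basisOneIJK.repr_self i, repr_basisOneIJK]; rfl

@[simp]
theorem imI_basisOneIJK (i : Fin 4) : (basisOneIJK i : ℍ[R]).imI = Finsupp.single i 1 1 := by
  rw [← basisOneIJK.repr_self i, repr_basisOneIJK]; rfl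

@[simp]
theorem imJ_basisOneIJK (i : Fin 4) : (basisOneIJK i : ℍ[R]).imJ = Finsupp.single i 1 2 := by
  rw [← basisOneIJK.repr_self i, repr_basisOneIJK]; rfl

@[simp]
theorem imK_basisOneIJK (i : Fin 4) : (basisOneIJK i : ℍ[R]).imK = Finsupp.single i 1 3 := by
  rw [← basisOneIJK.repr_self i, repr_basisOneIJK]; rfl

theorem toMatrix_mulLeft (q : ℍ[R]) :
    LinearMap.toMatrix basisOneIJK basisOneIJK (LinearMap.mulLeft R q) =
      !![q.re, -q.imI, -q.imJ, -q.imK;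
         q.imI, q.re, -q.imK, q.imJ;
         q.imJ, q.imK, q.re, -q.imI;
         q.imK, -q.imJ, q.imI, q.re] := by
  ext i j
  fin_cases i <;> fin_cases j <;>
    simp [LinearMap.toMatrix_apply, re_mul, imI_mul, imJ_mul, imK_mul]

theorem toMatrix_mulRight (q : ℍ[R]) :
    LinearMap.toMatrix basisOneIJK basisOneIJK (LinearMap.mulRight R q) =
      !![q.re, -q.imI, -q.imJ, -q.imK;
         q.imI, q.re, q.imK, -q.imJ;
         q.imJ, -q.imK, q.re, q.imI;
         q.imK, q.imJ, -q.imI, q.re] := by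
  ext i j
  fin_cases i <;> fin_cases j <;>
    simp [LinearMap.toMatrix_apply, re_mul, imI_mul, imJ_mul, imK_mul]

theorem normSq_im (q : ℍ[R]) : normSq q.im = q.imI ^ 2 + q.imJ ^ 2 + q.imK ^ 2 := by
  simp [normSq_def']

theorem charpoly_mulLeft_add_mulRight (p q : ℍ[R]) :
    (LinearMap.mulLeft R p + LinearMap.mulRight R q).charpoly =
      ((X - C (p.re + q.re)) ^ 2 + C (normSq p.im + normSq q.im)) ^ 2 -
        C (4 * normSq p.im * normSq q.im) := by
  rw [← LinearMap.charpoly_toMatrix _ basisOneIJK, map_add, toMatrix_mulLeft, toMatrix_mulRight,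
    Matrix.charpoly, Matrix.det_fin_four, normSq_im, normSq_im]
  simp only [Matrix.charmatrix_apply, Matrix.diagonal_apply, Matrix.add_apply, Matrix.of_apply,
    Matrix.cons_val', Matrix.cons_val, Fin.reduceEq, ↓reduceIte, map_add, map_neg, map_mul,
    map_pow, map_ofNat]
  ring

end Quaternion

/-- The characteristic polynomial of the Sylvester operator `S_{F,G}` equals
`((X − (F₀+G₀))² + F_v^s + G_v^s)² − 4 F_v^s G_v^s` in `ℂ[X]`. -/
theorem sylvester_charpoly (F G : Quaternion ℂ) :
    LinearMap.charpoly (sylvesterOp F G) =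
      ((X - C (F.re + G.re)) ^ 2 + C (normSq F.im + normSq G.im)) ^ 2 -
        C (4 * normSq F.im * normSq G.im) :=
  charpoly_mulLeft_add_mulRight F G
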